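/- Let n ≥ 1. For every permutation p of {1,…,n}, the last entry p_n is a leaf of the minmax tree T^m_p. -/

import Mathlib

/-- Binary trees with natural-number labels, used to model minmax trees of
permutations. -/
inductive BTree where
  | nil : BTree
  | node : ℕ → BTree → BTree → BTree
deriving DecidableEq, Repr

namespace BTree

/-- The label of the root (if any). -/
def rootVal : BTree → Option ℕ
  | .nil => none
  | .node v _ _ => some v

/-- Whether the value `x` occurs as a label in the tree. -/
def memB : BTree → ℕ → Bool
  | .nil, _ => false
  | .node v l r, x => (x == v) || memB l x || memB r x

/-- The number of children of the (unique, for permutations) node labelled `x`. -/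
def numChildren : BTree → ℕ → ℕ
  | .nil, _ => 0
  | .node v l r, x =>
      if x = v then (if l = .nil then 0 else 1) + (if r = .nil then 0 else 1)
      else numChildren l x + numChildren r x

/-- `x` is a leaf of the tree: it occurs in the tree and has no children. -/
def IsLeaf (t : BTree) (x : ℕ) : Prop := t.memB x = true ∧ t.numChildren x = 0

instance (t : BTree) (x : ℕ) : Decidable (t.IsLeaf x) := by unfold IsLeaf; infer_instance

/-- `childB t x y = true` iff `x` is a child of `y` in `t`, i.e. `x` is the root of
the left or the right subtree hanging from `y`. -/
def childB : BTree → ℕ → ℕ → Bool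
  | .nil, _, _ => false
  | .node v l r, x, y =>
      ((y == v) && (l.rootVal == some x || r.rootVal == some x))
      || childB l x y || childB r x y

/-- `ancB t x y = true` iff `x` is a (strict) ancestor of `y` in `t`, i.e. `y` lies
in a subtree hanging from `x`. -/
def ancB : BTree → ℕ → ℕ → Bool
  | .nil, _, _ => false
  | .node v l r, x, y =>
      ((x == v) && (memB l y || memB r y)) || ancB l x y || ancB r x y

end BTree

/-- `x` is the leftmost-eligible extreme letter of `l`: the minimum or the maximum. -/
def isExtreme (l : List ℕ) (x : ℕ) : Bool :=
  (l.min? == some x) || (l.max? == some x)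

/-- Fuelled construction of the minmax tree of a list of distinct naturals:
split the list as `u ++ [m] ++ v` where `m` is the leftmost of the minimum and
maximum letters, put `m` at the root and recurse on `u` (left) and `v` (right). -/
def mmAux : ℕ → List ℕ → BTree
  | 0, _ => .nil
  | fuel+1, l =>
    if l.isEmpty then .nil
    else
      let k := l.findIdx (isExtreme l)
      .node (l.getD k 0) (mmAux fuel (l.take k)) (mmAux fuel (l.drop (k+1)))

/-- The minmax tree `T^m_p` of a word `l` (with distinct letters). -/
def minmaxTree (l : List ℕ) : BTree := mmAux l.length l

/-- The word `p_1 p_2 … p_n` on the letters `{1,…,n}` associated to a permutation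
`p` of `Fin n`. -/
def permList (n : ℕ) (p : Equiv.Perm (Fin n)) : List ℕ :=
  List.ofFn (fun i => (p i : ℕ) + 1)

/-- The `i`-th entry `p_i` (1-indexed) of the permutation `p`. -/
def entryAt (n : ℕ) (p : Equiv.Perm (Fin n)) (i : ℕ) : ℕ :=
  (permList n p).getD (i - 1) 0

/-!
In a word with at least two distinct letters the minimum and the maximum are different letters,
so at least one of them is not the last letter and the root `m` of the minmax tree of `u m v`
is not the last letter either. Hence the last letter lies in `v`, where it is again last, and
it is not in `u`. Induction on the length ends at a one-letter word, whose tree is a single leaf.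
-/

namespace BTree

lemma numChildren_eq_zero_of_memB_eq_false {t : BTree} {x : ℕ} (h : t.memB x = false) :
    t.numChildren x = 0 := by
  induction t with
  | nil => rfl
  | node v l r ihl ihr =>
    simp only [memB, Bool.or_eq_false_iff, beq_eq_false_iff_ne] at h
    simp [numChildren, h.1.1, ihl h.1.2, ihr h.2]

lemma isLeaf_node_nil_nil (v : ℕ) : (node v nil nil).IsLeaf v := by
  simp [IsLeaf, memB, numChildren]

lemma IsLeaf.node_right {v x : ℕ} {l r : BTree} (hr : r.IsLeaf x) (hxv : x ≠ v)
    (hl : l.memB x = false) : (node v l r).IsLeaf x := by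
  refine ⟨by simp [memB, hr.1], ?_⟩
  simp [numChildren, hxv, numChildren_eq_zero_of_memB_eq_false hl, hr.2]

end BTree

lemma findIdx_isExtreme_lt_length {l : List ℕ} (hl : l ≠ []) :
    l.findIdx (isExtreme l) < l.length := by
  obtain ⟨a, ha⟩ := Option.isSome_iff_exists.1 <| List.isSome_min?_of_ne_nil hl
  exact List.findIdx_lt_length_of_exists ⟨a, List.min?_mem ha, by simp [isExtreme, ha]⟩

lemma mmAux_nil (fuel : ℕ) : mmAux fuel [] = .nil := by
  cases fuel <;> simp [mmAux]

lemma mmAux_succ_of_ne_nil (fuel : ℕ) {l : List ℕ} (hl : l ≠ []) :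
    mmAux (fuel + 1) l =
      .node (l.getD (l.findIdx (isExtreme l)) 0) (mmAux fuel (l.take (l.findIdx (isExtreme l))))
        (mmAux fuel (l.drop (l.findIdx (isExtreme l) + 1))) := by
  simp [mmAux, hl]

lemma mem_of_memB_mmAux {fuel : ℕ} {l : List ℕ} {x : ℕ} (h : (mmAux fuel l).memB x = true) :
    x ∈ l := by
  induction fuel generalizing l with
  | zero => simp [mmAux, BTree.memB] at h
  | succ fuel ih =>
    rcases eq_or_ne l [] with rfl | hl
    · simp [mmAux_nil, BTree.memB] at h
    rw [mmAux_succ_of_ne_nil fuel hl] at h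
    simp only [BTree.memB, Bool.or_eq_true, beq_iff_eq] at h
    rcases h with (rfl | h) | h
    · rw [List.getD_eq_getElem _ _ (findIdx_isExtreme_lt_length hl)]
      exact List.getElem_mem _
    · exact List.mem_of_mem_take (ih h)
    · exact List.mem_of_mem_drop (ih h)

lemma exists_isExtreme_mem_dropLast {l : List ℕ} (hnd : l.Nodup) (hl : 2 ≤ l.length) :
    ∃ y ∈ l.dropLast, isExtreme l y := by
  have hne : l ≠ [] := List.ne_nil_of_length_pos (by omega)
  obtain ⟨a, ha⟩ := Option.isSome_iff_exists.1 <| List.isSome_min?_of_ne_nil hne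
  obtain ⟨b, hb⟩ := Option.isSome_iff_exists.1 <| List.isSome_max?_of_ne_nil hne
  have hab : a ≠ b := by
    rintro rfl
    have hconst : l = List.replicate l.length a := List.eq_replicate_iff.2
      ⟨rfl, fun y hy => le_antisymm ((List.max?_eq_some_iff.1 hb).2 y hy)
        ((List.min?_eq_some_iff.1 ha).2 y hy)⟩
    have := List.nodup_replicate.1 (hconst ▸ hnd)
    omega
  by_cases halast : a = l.getLast hne
  · exact ⟨b, List.mem_dropLast_of_mem_of_ne_getLast (List.max?_mem hb) (halast ▸ hab.symm),
      by simp [isExtreme, hb]⟩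
  · exact ⟨a, List.mem_dropLast_of_mem_of_ne_getLast (List.min?_mem ha) halast,
      by simp [isExtreme, ha]⟩

lemma findIdx_isExtreme_lt_length_sub_one {l : List ℕ} (hnd : l.Nodup) (hl : 2 ≤ l.length) :
    l.findIdx (isExtreme l) < l.length - 1 := by
  have hprefix : l.dropLast <+: l := List.dropLast_prefix l
  have hlt := List.findIdx_lt_length_of_exists (exists_isExtreme_mem_dropLast hnd hl)
  rw [hprefix.findIdx_eq_of_findIdx_lt_length hlt]
  simpa using hlt

lemma isLeaf_mmAux_getLast {fuel : ℕ} {l : List ℕ} (hnd : l.Nodup) (hl : l ≠ [])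
    (hfuel : l.length ≤ fuel) : (mmAux fuel l).IsLeaf (l.getLast hl) := by
  induction fuel generalizing l with
  | zero => exact absurd (List.length_eq_zero_iff.1 (Nat.le_zero.1 hfuel)) hl
  | succ fuel ih =>
    by_cases hlen : l.length = 1
    · obtain ⟨a, rfl⟩ := List.length_eq_one_iff.1 hlen
      simpa [mmAux, isExtreme, mmAux_nil] using BTree.isLeaf_node_nil_nil a
    set k := l.findIdx (isExtreme l)
    have hk : k < l.length - 1 :=
      findIdx_isExtreme_lt_length_sub_one hnd (by have := List.length_pos_iff.2 hl; omega)
    have hright : l.drop (k + 1) ≠ [] := by simp; omega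
    have hlast : (l.drop (k + 1)).getLast hright = l.getLast hl := List.getLast_drop hright
    have hmem : l.getLast hl ∈ l.drop (k + 1) := hlast ▸ List.getLast_mem hright
    have hroot : l.getD k 0 ∈ l.take (k + 1) := by
      rw [List.getD_eq_getElem _ _ (by omega)]
      exact List.mem_iff_getElem.2 ⟨k, by simp; omega, by simp⟩
    rw [mmAux_succ_of_ne_nil fuel hl]
    refine (hlast ▸ ih (hnd.sublist (List.drop_sublist _ _)) hright (by simp; omega)).node_right
      ?_ ?_
    · exact fun h => List.disjoint_take_drop hnd le_rfl hroot (h ▸ hmem)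
    · exact Bool.eq_false_iff.2 fun h =>
        List.disjoint_take_drop hnd k.le_succ (mem_of_memB_mmAux h) hmem

theorem isLeaf_minmaxTree_getLast {l : List ℕ} (hnd : l.Nodup) (hl : l ≠ []) :
    (minmaxTree l).IsLeaf (l.getLast hl) :=
  isLeaf_mmAux_getLast hnd hl le_rfl

@[simp]
lemma length_permList (n : ℕ) (p : Equiv.Perm (Fin n)) : (permList n p).length = n := by
  simp [permList]

lemma nodup_permList (n : ℕ) (p : Equiv.Perm (Fin n)) : (permList n p).Nodup :=
  List.nodup_ofFn.2 fun i j hij => p.injective (Fin.ext (by simpa using hij))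

lemma entryAt_self_eq_getLast (n : ℕ) (p : Equiv.Perm (Fin n)) (h : permList n p ≠ []) :
    entryAt n p n = (permList n p).getLast h := by
  have hn : 0 < n := by simpa using List.length_pos_iff.2 h
  rw [entryAt, List.getD_eq_getElem _ _ (by simp; omega), List.getLast_eq_getElem]
  simp

/-- For `n ≥ 1`, in every permutation `p` of `{1,…,n}` the last
entry `p_n` is a leaf of the minmax tree. -/
theorem last_entry_leaf (n : ℕ) (hn : 1 ≤ n) (p : Equiv.Perm (Fin n)) :
    (minmaxTree (permList n p)).IsLeaf (entryAt n p n) := by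
  have hne : permList n p ≠ [] := List.ne_nil_of_length_pos (by rw [length_permList]; exact hn)
  rw [entryAt_self_eq_getLast n p hne]
  exact isLeaf_minmaxTree_getLast (nodup_permList n p) hne
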